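/- Let H be a dual quasi-bialgebra over a field k and let M be a right dual quasi-Hopf H-bicomodule such that the map ε_M : M^{coH}⊗H → M, ε_M(m⊗h)=mh, is bijective. Define τ:M→M^{coH} by τ(m):=(id_{M^{coH}}⊗ε)(ε_M⁻¹(m)). Then for all m∈M and h∈H: (a) ε_M⁻¹(m)=τ(m₀)⊗m₁; (b) τ(mh)=ω⁻¹(τ(m₀)₋₁⊗m₁⊗h)·τ(m₀)₀; (c) m₋₁⊗τ(m₀)=τ(m₀)₋₁m₁⊗τ(m₀)₀; (d) τ(m₀)m₁=m. -/

import Mathlib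

/-! Preliminaries: dual quasi-bialgebras, preantipodes and right dual
quasi-Hopf bicomodules, formulated via linear maps over a field `k`.
All Sweedler-notation identities are encoded as identities of (composites of)
linear maps on tensor products. -/

open TensorProduct

set_option maxHeartbeats 1000000
set_option synthInstance.maxHeartbeats 400000

noncomputable section

universe u

section Defs

variable (k : Type u) [Field k] {H : Type u} [AddCommGroup H] [Module k H]

/-- Comultiplication on a two-fold tensor product induced by `c` on each factor:
`g ⊗ h ↦ (g₁ ⊗ h₁) ⊗ (g₂ ⊗ h₂)`. -/
def comul2 (c : H →ₗ[k] H ⊗[k] H) :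
    (H ⊗[k] H) →ₗ[k] (H ⊗[k] H) ⊗[k] (H ⊗[k] H) :=
  (tensorTensorTensorComm k H H H H).toLinearMap ∘ₗ map c c

/-- Comultiplication on a three-fold tensor product. -/
def comul3 (c : H →ₗ[k] H ⊗[k] H) :
    (H ⊗[k] (H ⊗[k] H)) →ₗ[k] (H ⊗[k] (H ⊗[k] H)) ⊗[k] (H ⊗[k] (H ⊗[k] H)) :=
  (tensorTensorTensorComm k H H (H ⊗[k] H) (H ⊗[k] H)).toLinearMap ∘ₗ map c (comul2 k c)

/-- Comultiplication on a four-fold tensor product. -/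
def comul4 (c : H →ₗ[k] H ⊗[k] H) :
    (H ⊗[k] (H ⊗[k] (H ⊗[k] H))) →ₗ[k]
      (H ⊗[k] (H ⊗[k] (H ⊗[k] H))) ⊗[k] (H ⊗[k] (H ⊗[k] (H ⊗[k] H))) :=
  (tensorTensorTensorComm k H H (H ⊗[k] (H ⊗[k] H)) (H ⊗[k] (H ⊗[k] H))).toLinearMap ∘ₗ
    map c (comul3 k c)

/-- Counit on a two-fold tensor product. -/
def counit2 (e : H →ₗ[k] k) : (H ⊗[k] H) →ₗ[k] k :=
  LinearMap.mul' k k ∘ₗ map e e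

/-- Counit on a three-fold tensor product. -/
def counit3 (e : H →ₗ[k] k) : (H ⊗[k] (H ⊗[k] H)) →ₗ[k] k :=
  LinearMap.mul' k k ∘ₗ map e (counit2 k e)

/-- Counit on a four-fold tensor product. -/
def counit4 (e : H →ₗ[k] k) : (H ⊗[k] (H ⊗[k] (H ⊗[k] H))) →ₗ[k] k :=
  LinearMap.mul' k k ∘ₗ map e (counit3 k e)

/-- Convolution product of two functionals with respect to a comultiplication `D`. -/
def conv (X : Type u) [AddCommGroup X] [Module k X] (D : X →ₗ[k] X ⊗[k] X)
    (φ ψ : X →ₗ[k] k) : X →ₗ[k] k :=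
  LinearMap.mul' k k ∘ₗ map φ ψ ∘ₗ D

/-- Convolution `f ⋆ φ` of an `H`-valued map with a functional. -/
def convR (X : Type u) [AddCommGroup X] [Module k X] (D : X →ₗ[k] X ⊗[k] X)
    (f : X →ₗ[k] H) (φ : X →ₗ[k] k) : X →ₗ[k] H :=
  (TensorProduct.rid k H).toLinearMap ∘ₗ map f φ ∘ₗ D

/-- Convolution `φ ⋆ f` of a functional with an `H`-valued map. -/
def convL (X : Type u) [AddCommGroup X] [Module k X] (D : X →ₗ[k] X ⊗[k] X)
    (φ : X →ₗ[k] k) (f : X →ₗ[k] H) : X →ₗ[k] H :=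
  (TensorProduct.lid k H).toLinearMap ∘ₗ map φ f ∘ₗ D

end Defs

/-- A dual quasi-bialgebra `(H, m, u, Δ, ε, ω)` over a field `k`. -/
structure DualQuasiBialgebra (k : Type u) [Field k] (H : Type u)
    [AddCommGroup H] [Module k H] : Type u where
  /-- the comultiplication `Δ` -/
  comul : H →ₗ[k] H ⊗[k] H
  /-- the counit `ε` -/
  counit : H →ₗ[k] k
  /-- the multiplication `m` -/
  mul : (H ⊗[k] H) →ₗ[k] H
  /-- the unit element `1_H` -/
  one : H
  /-- the reassociator `ω` -/
  omega : (H ⊗[k] (H ⊗[k] H)) →ₗ[k] k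
  /-- the convolution inverse `ω⁻¹` of the reassociator -/
  omegaInv : (H ⊗[k] (H ⊗[k] H)) →ₗ[k] k
  /-- `Δ` is coassociative -/
  coassoc : (TensorProduct.assoc k H H H).toLinearMap ∘ₗ comul.rTensor H ∘ₗ comul
      = comul.lTensor H ∘ₗ comul
  /-- `ε` is a left counit -/
  counit_comul : ∀ h : H, TensorProduct.lid k H ((counit.rTensor H) (comul h)) = h
  /-- `ε` is a right counit -/
  comul_counit : ∀ h : H, TensorProduct.rid k H ((counit.lTensor H) (comul h)) = h
  /-- `m` is a morphism of coalgebras: compatibility with `Δ` -/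
  comul_mul : comul ∘ₗ mul = map mul mul ∘ₗ comul2 k comul
  /-- `m` is a morphism of coalgebras: compatibility with `ε` -/
  counit_mul : counit ∘ₗ mul = counit2 k counit
  /-- `u` is a morphism of coalgebras: `Δ(1_H) = 1_H ⊗ 1_H` -/
  comul_one : comul one = one ⊗ₜ[k] one
  /-- `u` is a morphism of coalgebras: `ε(1_H) = 1` -/
  counit_one : counit one = 1
  /-- `m` is left unitary -/
  one_mul' : ∀ h : H, mul (one ⊗ₜ[k] h) = h
  /-- `m` is right unitary -/
  mul_one' : ∀ h : H, mul (h ⊗ₜ[k] one) = h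
  /-- `ω⁻¹` is a right convolution inverse of `ω` -/
  omega_inv : conv k (H ⊗[k] (H ⊗[k] H)) (comul3 k comul) omega omegaInv = counit3 k counit
  /-- `ω⁻¹` is a left convolution inverse of `ω` -/
  inv_omega : conv k (H ⊗[k] (H ⊗[k] H)) (comul3 k comul) omegaInv omega = counit3 k counit
  /-- the 3-cocycle condition:
  `ω(g₁⊗h₁⊗k₁l₁) ω(g₂h₂⊗k₂⊗l₂) = ε(g₁)ω(h₁⊗k₁⊗l₁) ⋆ ω(g⊗h₂k₂⊗l) ⋆ ω(g⊗h⊗k)ε(l)` -/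
  omega_cocycle :
    conv k (H ⊗[k] (H ⊗[k] (H ⊗[k] H))) (comul4 k comul)
      (omega ∘ₗ LinearMap.lTensor H (LinearMap.lTensor H mul))
      (omega ∘ₗ mul.rTensor (H ⊗[k] H) ∘ₗ
        (TensorProduct.assoc k H H (H ⊗[k] H)).symm.toLinearMap)
    = conv k (H ⊗[k] (H ⊗[k] (H ⊗[k] H))) (comul4 k comul)
        (LinearMap.mul' k k ∘ₗ map counit omega)
        (conv k (H ⊗[k] (H ⊗[k] (H ⊗[k] H))) (comul4 k comul)
          (omega ∘ₗ LinearMap.lTensor H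
            (mul.rTensor H ∘ₗ (TensorProduct.assoc k H H H).symm.toLinearMap))
          (LinearMap.mul' k k ∘ₗ map omega counit ∘ₗ
            (TensorProduct.assoc k H (H ⊗[k] H) H).symm.toLinearMap ∘ₗ
            LinearMap.lTensor H (TensorProduct.assoc k H H H).symm.toLinearMap))
  /-- unitality of `ω`: `ω(1_H ⊗ h ⊗ l) = ε(h)ε(l)` -/
  omega_one_left : ∀ x : H ⊗[k] H, omega (one ⊗ₜ[k] x) = counit2 k counit x
  /-- unitality of `ω`: `ω(g ⊗ 1_H ⊗ l) = ε(g)ε(l)` -/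
  omega_one_mid : ∀ g h : H, omega (g ⊗ₜ[k] (one ⊗ₜ[k] h)) = counit g * counit h
  /-- unitality of `ω`: `ω(g ⊗ h ⊗ 1_H) = ε(g)ε(h)` -/
  omega_one_right : ∀ g h : H, omega (g ⊗ₜ[k] (h ⊗ₜ[k] one)) = counit g * counit h
  /-- quasi-associativity: `g₁(h₁k₁) ω(g₂⊗h₂⊗k₂) = ω(g₁⊗h₁⊗k₁) (g₂h₂)k₂` -/
  quasi_assoc :
    convR k (H ⊗[k] (H ⊗[k] H)) (comul3 k comul) (mul ∘ₗ mul.lTensor H) omega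
    = convL k (H ⊗[k] (H ⊗[k] H)) (comul3 k comul) omega
        (mul ∘ₗ mul.rTensor H ∘ₗ (TensorProduct.assoc k H H H).symm.toLinearMap)

section Preantipode

variable (k : Type u) [Field k] {H : Type u} [AddCommGroup H] [Module k H]

/-- `S : H → H` is a preantipode for the dual quasi-bialgebra `Q`:
(P1) `S(h₂)₁ ⊗ h₁S(h₂)₂ = S(h) ⊗ 1_H`;
(P2) `S(h₁)₁h₂ ⊗ S(h₁)₂ = 1_H ⊗ S(h)`;
(P3) `ω(h₁ ⊗ S(h₂) ⊗ h₃) = ε(h)`. -/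
def IsPreantipode (Q : DualQuasiBialgebra k H) (S : H →ₗ[k] H) : Prop :=
  (∀ h : H,
      (Q.mul.lTensor H ∘ₗ (TensorProduct.leftComm k H H H).toLinearMap ∘ₗ
        (Q.comul ∘ₗ S).lTensor H ∘ₗ Q.comul) h = S h ⊗ₜ[k] Q.one) ∧
  (∀ h : H,
      (Q.mul.rTensor H ∘ₗ (TensorProduct.assoc k H H H).symm.toLinearMap ∘ₗ
        ((TensorProduct.comm k H H).toLinearMap.lTensor H) ∘ₗ
        (TensorProduct.assoc k H H H).toLinearMap ∘ₗ
        (Q.comul ∘ₗ S).rTensor H ∘ₗ Q.comul) h = Q.one ⊗ₜ[k] S h) ∧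
  (∀ h : H,
      (Q.omega ∘ₗ (S.rTensor H).lTensor H ∘ₗ Q.comul.lTensor H ∘ₗ Q.comul) h = Q.counit h)

end Preantipode

/-- A right dual quasi-Hopf `H`-bicomodule over the dual quasi-bialgebra `Q`. -/
structure Bicomodule (k : Type u) [Field k] (H : Type u) [AddCommGroup H] [Module k H]
    (Q : DualQuasiBialgebra k H) (M : Type u) [AddCommGroup M] [Module k M] : Type u where
  /-- the left `H`-coaction `ρˡ : m ↦ m₋₁ ⊗ m₀` -/
  coactL : M →ₗ[k] H ⊗[k] M
  /-- the right `H`-coaction `ρʳ : m ↦ m₀ ⊗ m₁` -/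
  coactR : M →ₗ[k] M ⊗[k] H
  /-- the right `H`-action `m ⊗ h ↦ mh` -/
  act : (M ⊗[k] H) →ₗ[k] M
  /-- coassociativity of the left coaction -/
  coassocL : (TensorProduct.assoc k H H M).toLinearMap ∘ₗ Q.comul.rTensor M ∘ₗ coactL
      = coactL.lTensor H ∘ₗ coactL
  /-- counitality of the left coaction -/
  counitL : ∀ m : M, TensorProduct.lid k M ((Q.counit.rTensor M) (coactL m)) = m
  /-- coassociativity of the right coaction -/
  coassocR : (TensorProduct.assoc k M H H).toLinearMap ∘ₗ coactR.rTensor H ∘ₗ coactR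
      = Q.comul.lTensor M ∘ₗ coactR
  /-- counitality of the right coaction -/
  counitR : ∀ m : M, TensorProduct.rid k M ((Q.counit.lTensor M) (coactR m)) = m
  /-- the two coactions commute: `M` is an `H`-bicomodule -/
  bicom : coactR.lTensor H ∘ₗ coactL
      = (TensorProduct.assoc k H M H).toLinearMap ∘ₗ coactL.rTensor H ∘ₗ coactR
  /-- unitality of the action: `m·1_H = m` -/
  act_one : ∀ m : M, act (m ⊗ₜ[k] Q.one) = m
  /-- left colinearity of the action: `(mh)₋₁ ⊗ (mh)₀ = m₋₁h₁ ⊗ m₀h₂` -/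
  coactL_act : coactL ∘ₗ act
      = map Q.mul act ∘ₗ (tensorTensorTensorComm k H M H H).toLinearMap ∘ₗ map coactL Q.comul
  /-- right colinearity of the action: `(mh)₀ ⊗ (mh)₁ = m₀h₁ ⊗ m₁h₂` -/
  coactR_act : coactR ∘ₗ act
      = map act Q.mul ∘ₗ (tensorTensorTensorComm k M H H H).toLinearMap ∘ₗ map coactR Q.comul
  /-- quasi-associativity of the action:
  `(mh)l = ω⁻¹(m₋₁⊗h₁⊗l₁) m₀(h₂l₂) ω(m₁⊗h₃⊗l₃)` -/
  act_act : act ∘ₗ act.rTensor H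
      = (TensorProduct.rid k M).toLinearMap ∘ₗ
        map (act ∘ₗ Q.mul.lTensor M) Q.omega ∘ₗ
        ((tensorTensorTensorComm k M H (H ⊗[k] H) (H ⊗[k] H)).toLinearMap ∘ₗ
          map coactR (comul2 k Q.comul)) ∘ₗ
        (TensorProduct.lid k (M ⊗[k] (H ⊗[k] H))).toLinearMap ∘ₗ
        map Q.omegaInv (LinearMap.id : M ⊗[k] (H ⊗[k] H) →ₗ[k] M ⊗[k] (H ⊗[k] H)) ∘ₗ
        ((tensorTensorTensorComm k H M (H ⊗[k] H) (H ⊗[k] H)).toLinearMap ∘ₗ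
          map coactL (comul2 k Q.comul)) ∘ₗ
        (TensorProduct.assoc k M H H).toLinearMap

section Coinv

variable (k : Type u) [Field k] {H : Type u} [AddCommGroup H] [Module k H]
  {M : Type u} [AddCommGroup M] [Module k M]

/-- The coinvariants `{x ∈ M ∣ ρʳ(x) = x ⊗ 1_H}` of a right coaction `r`. -/
def coinv (oneH : H) (r : M →ₗ[k] M ⊗[k] H) : Submodule k M :=
  LinearMap.ker (r - (TensorProduct.mk k M H).flip oneH)

variable {Q : DualQuasiBialgebra k H}

/-- The canonical map `ε_M : M^{coH} ⊗ H → M`, `m ⊗ h ↦ mh`. -/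
def epsM (B : Bicomodule k H Q M) :
    ((coinv k Q.one B.coactR) ⊗[k] H) →ₗ[k] M :=
  B.act ∘ₗ map (coinv k Q.one B.coactR).subtype LinearMap.id

end Coinv

section TauMaps

variable (k : Type u) [Field k] {H : Type u} [AddCommGroup H] [Module k H]
  {M : Type u} [AddCommGroup M] [Module k M] {Q : DualQuasiBialgebra k H}

/-- The swap `(b ⊗ c) ⊗ d ↦ (b ⊗ d) ⊗ c`. -/
def sigmaSwap : ((H ⊗[k] H) ⊗[k] H) →ₗ[k] ((H ⊗[k] H) ⊗[k] H) :=
  (TensorProduct.assoc k H H H).symm.toLinearMap ∘ₗ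
    (TensorProduct.comm k H H).toLinearMap.lTensor H ∘ₗ
    (TensorProduct.assoc k H H H).toLinearMap

/-- The map `τ : M → M`, `τ(m) = ω(m₋₁ ⊗ S(m₁)₁ ⊗ m₂) · m₀ S(m₁)₂`,
associated to a preantipode-candidate `S`. -/
def tauMap (B : Bicomodule k H Q M) (S : H →ₗ[k] H) : M →ₗ[k] M :=
  (TensorProduct.lid k M).toLinearMap ∘ₗ
    map Q.omega B.act ∘ₗ
    (TensorProduct.assoc k H (H ⊗[k] H) (M ⊗[k] H)).symm.toLinearMap ∘ₗ
    ((TensorProduct.leftComm k M (H ⊗[k] H) H).toLinearMap ∘ₗ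
      (sigmaSwap k).lTensor M).lTensor H ∘ₗ
    (((Q.comul ∘ₗ S).rTensor H).lTensor M).lTensor H ∘ₗ
    (Q.comul.lTensor M).lTensor H ∘ₗ
    B.coactR.lTensor H ∘ₗ
    B.coactL

/-- For a linear map `t : M → M`, the map
`m ⊗ h ↦ ω⁻¹(t(m₀)₋₁ ⊗ m₁ ⊗ h) · t(m₀)₀`. -/
def rhsTauAct (B : Bicomodule k H Q M) (t : M →ₗ[k] M) : (M ⊗[k] H) →ₗ[k] M :=
  (TensorProduct.lid k M).toLinearMap ∘ₗ
    map Q.omegaInv (LinearMap.id : M →ₗ[k] M) ∘ₗ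
    (TensorProduct.assoc k H (H ⊗[k] H) M).symm.toLinearMap ∘ₗ
    (TensorProduct.comm k M (H ⊗[k] H)).toLinearMap.lTensor H ∘ₗ
    (TensorProduct.assoc k H M (H ⊗[k] H)).toLinearMap ∘ₗ
    (TensorProduct.assoc k (H ⊗[k] M) H H).toLinearMap ∘ₗ
    ((B.coactL ∘ₗ t).rTensor H).rTensor H ∘ₗ
    B.coactR.rTensor H

/-- For a linear map `t : M → M`, the map `m ↦ t(m₀)₋₁ m₁ ⊗ t(m₀)₀`. -/
def rhsColinear (B : Bicomodule k H Q M) (t : M →ₗ[k] M) : M →ₗ[k] (H ⊗[k] M) :=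
  Q.mul.rTensor M ∘ₗ
    (TensorProduct.assoc k H H M).symm.toLinearMap ∘ₗ
    (TensorProduct.comm k M H).toLinearMap.lTensor H ∘ₗ
    (TensorProduct.assoc k H M H).toLinearMap ∘ₗ
    (B.coactL ∘ₗ t).rTensor H ∘ₗ
    B.coactR

end TauMaps

section Hat

variable (k : Type u) [Field k] {H : Type u} [AddCommGroup H] [Module k H]

/-- The right `H`-coaction on `H ⊗̂ H`: `h ⊗ l ↦ (h₁ ⊗ l₁) ⊗ h₂l₂`. -/
def hatCoactR (Q : DualQuasiBialgebra k H) : (H ⊗[k] H) →ₗ[k] (H ⊗[k] H) ⊗[k] H :=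
  Q.mul.lTensor (H ⊗[k] H) ∘ₗ comul2 k Q.comul

/-- The left `H`-coaction on `H ⊗̂ H`: `h ⊗ l ↦ l₁ ⊗ (h ⊗ l₂)`. -/
def hatCoactL (Q : DualQuasiBialgebra k H) : (H ⊗[k] H) →ₗ[k] H ⊗[k] (H ⊗[k] H) :=
  (TensorProduct.leftComm k H H H).toLinearMap ∘ₗ Q.comul.lTensor H

/-- The right `H`-action on `H ⊗̂ H`:
`(x ⊗ y) · h = (x₁ ⊗ y₁h₁) · ω(x₂ ⊗ y₂ ⊗ h₂)`. -/
def hatAct (Q : DualQuasiBialgebra k H) : ((H ⊗[k] H) ⊗[k] H) →ₗ[k] (H ⊗[k] H) :=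
  (TensorProduct.rid k (H ⊗[k] H)).toLinearMap ∘ₗ
    map (Q.mul.lTensor H ∘ₗ (TensorProduct.assoc k H H H).toLinearMap)
      (Q.omega ∘ₗ (TensorProduct.assoc k H H H).toLinearMap) ∘ₗ
    (tensorTensorTensorComm k (H ⊗[k] H) (H ⊗[k] H) H H).toLinearMap ∘ₗ
    map (comul2 k Q.comul) Q.comul

/-- The map `ε̂_H : (H ⊗̂ H)^{coH} ⊗ H → H ⊗ H`,
`(x ⊗ y) ⊗ h ↦ x₁ ⊗ y₁h₁ · ω(x₂ ⊗ y₂ ⊗ h₂)`. -/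
def epsHat (Q : DualQuasiBialgebra k H) :
    ((coinv k Q.one (hatCoactR k Q)) ⊗[k] H) →ₗ[k] H ⊗[k] H :=
  hatAct k Q ∘ₗ map (coinv k Q.one (hatCoactR k Q)).subtype LinearMap.id

end Hat

section GroupAlgebra

variable (k : Type u) [Field k] (G : Type u) [Group G]

/-- The group-like comultiplication on the group algebra `kG`: `g ↦ g ⊗ g`. -/
def comulG : MonoidAlgebra k G →ₗ[k] MonoidAlgebra k G ⊗[k] MonoidAlgebra k G :=
  Finsupp.lift (MonoidAlgebra k G ⊗[k] MonoidAlgebra k G) k G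
    (fun g => MonoidAlgebra.of k G g ⊗ₜ[k] MonoidAlgebra.of k G g) ∘ₗ (MonoidAlgebra.coeffLinearEquiv k).toLinearMap

/-- The counit on the group algebra `kG`: `g ↦ 1`. -/
def counitG : MonoidAlgebra k G →ₗ[k] k :=
  Finsupp.lift k k G (fun _ => (1 : k)) ∘ₗ (MonoidAlgebra.coeffLinearEquiv k).toLinearMap

/-- The linear extension of a map `θ : G × G × G → kˣ` to
`kG ⊗ kG ⊗ kG → k`. -/
def omegaTheta (θ : G → G → G → kˣ) :
    (MonoidAlgebra k G ⊗[k] (MonoidAlgebra k G ⊗[k] MonoidAlgebra k G)) →ₗ[k] k :=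
  TensorProduct.lift
    ((TensorProduct.lift.equiv (RingHom.id k) (MonoidAlgebra k G) (MonoidAlgebra k G) k).toLinearMap ∘ₗ
      Finsupp.lift (MonoidAlgebra k G →ₗ[k] MonoidAlgebra k G →ₗ[k] k) k G
        (fun g => Finsupp.lift (MonoidAlgebra k G →ₗ[k] k) k G
          (fun h => Finsupp.lift k k G (fun l => ((θ g h l : kˣ) : k)) ∘ₗ (MonoidAlgebra.coeffLinearEquiv k).toLinearMap) ∘ₗ (MonoidAlgebra.coeffLinearEquiv k).toLinearMap) ∘ₗ (MonoidAlgebra.coeffLinearEquiv k).toLinearMap)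

/-- The candidate preantipode on `kG`: `S(g) = θ(g,g⁻¹,g)⁻¹ · g⁻¹`. -/
def preantipodeG (θ : G → G → G → kˣ) : MonoidAlgebra k G →ₗ[k] MonoidAlgebra k G :=
  Finsupp.lift (MonoidAlgebra k G) k G
    (fun g => (((θ g g⁻¹ g)⁻¹ : kˣ) : k) • MonoidAlgebra.of k G g⁻¹) ∘ₗ (MonoidAlgebra.coeffLinearEquiv k).toLinearMap

end GroupAlgebra

section TauOf

variable (k : Type u) [Field k] {H : Type u} [AddCommGroup H] [Module k H]
  {M : Type u} [AddCommGroup M] [Module k M] {Q : DualQuasiBialgebra k H}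

/-- The map `τ = (id ⊗ ε) ∘ ε_M⁻¹ : M → M^{coH}` associated to a bijective `ε_M`. -/
def tauOf (B : Bicomodule k H Q M) (hb : Function.Bijective (epsM k B)) :
    M →ₗ[k] ↥(coinv k Q.one B.coactR) :=
  (TensorProduct.rid k ↥(coinv k Q.one B.coactR)).toLinearMap ∘ₗ
    Q.counit.lTensor ↥(coinv k Q.one B.coactR) ∘ₗ
    (LinearEquiv.ofBijective (epsM k B) hb).symm.toLinearMap

end TauOf

/-! Coinvariants `n` satisfy `ρʳ(n) = n ⊗ 1_H`, so `ρʳ(nh) = nh₁ ⊗ h₂` and `τ(nh) = ε(h) n`.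
Hence `(τ ⊗ id) ∘ ρʳ` is a left inverse of the bijection `ε_M`, which is (a), and (d) follows.
As `ε_M` is onto, (b) and (c) need only be checked on `m = ny` with `n` coinvariant. Over a
field `ρˡ` maps `M^{coH}` into `H ⊗ M^{coH}`, so quasi-associativity of the action reads
`(ny)h = ω⁻¹(n₋₁ ⊗ y₁ ⊗ h₁) n₀(y₂h₂)`, whose image under `τ` is `ω⁻¹(n₋₁ ⊗ y ⊗ h) n₀`; likewise
`(ny)₋₁ ⊗ τ((ny)₀) = n₋₁y ⊗ n₀`. -/

namespace DualQuasiBialgebra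

variable {k : Type u} [Field k] {H : Type u} [AddCommGroup H] [Module k H]
  (Q : DualQuasiBialgebra k H)

theorem rid_counit2_lTensor_comul2 (z : H ⊗[k] H) :
    TensorProduct.rid k (H ⊗[k] H) ((counit2 k Q.counit).lTensor (H ⊗[k] H) (comul2 k Q.comul z))
      = z := by
  induction z using TensorProduct.induction_on with
  | zero => simp
  | add u v hu hv => simp only [map_add, hu, hv]
  | tmul y h =>
    conv_rhs => rw [← Q.comul_counit y, ← Q.comul_counit h]
    simp only [comul2, LinearMap.comp_apply, map_tmul, LinearEquiv.coe_coe]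
    induction Q.comul y using TensorProduct.induction_on with
    | zero => simp
    | add u v hu hv => simp only [map_add, add_tmul, hu, hv]
    | tmul y₁ y₂ =>
      induction Q.comul h using TensorProduct.induction_on with
      | zero => simp
      | add u v hu hv => simp only [map_add, tmul_add, hu, hv]
      | tmul h₁ h₂ =>
        simp [counit2, TensorProduct.smul_tmul', smul_smul, mul_comm]

def omegaInvSmul (M : Type u) [AddCommGroup M] [Module k M] :
    (H ⊗[k] M) ⊗[k] (H ⊗[k] H) →ₗ[k] M :=
  (TensorProduct.lid k M).toLinearMap ∘ₗ map Q.omegaInv (LinearMap.id : M →ₗ[k] M) ∘ₗ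
    (TensorProduct.assoc k H (H ⊗[k] H) M).symm.toLinearMap ∘ₗ
    (TensorProduct.comm k M (H ⊗[k] H)).toLinearMap.lTensor H ∘ₗ
    (TensorProduct.assoc k H M (H ⊗[k] H)).toLinearMap

@[simp]
theorem omegaInvSmul_tmul {M : Type u} [AddCommGroup M] [Module k M] (a : H) (m : M)
    (z : H ⊗[k] H) : Q.omegaInvSmul M ((a ⊗ₜ m) ⊗ₜ z) = Q.omegaInv (a ⊗ₜ z) • m := by
  simp [omegaInvSmul]

def mulSwap (M : Type u) [AddCommGroup M] [Module k M] : (H ⊗[k] M) ⊗[k] H →ₗ[k] H ⊗[k] M :=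
  Q.mul.rTensor M ∘ₗ (TensorProduct.assoc k H H M).symm.toLinearMap ∘ₗ
    (TensorProduct.comm k M H).toLinearMap.lTensor H ∘ₗ (TensorProduct.assoc k H M H).toLinearMap

@[simp]
theorem mulSwap_tmul {M : Type u} [AddCommGroup M] [Module k M] (a : H) (m : M) (y : H) :
    Q.mulSwap M ((a ⊗ₜ m) ⊗ₜ y) = Q.mul (a ⊗ₜ y) ⊗ₜ m := by
  simp [mulSwap]

end DualQuasiBialgebra

namespace Bicomodule

variable {k : Type u} [Field k] {H : Type u} [AddCommGroup H] [Module k H]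
  {M : Type u} [AddCommGroup M] [Module k M] {Q : DualQuasiBialgebra k H}
  (B : Bicomodule k H Q M)

theorem coactR_coinv (n : coinv k Q.one B.coactR) : B.coactR n = n.1 ⊗ₜ Q.one := by
  simpa [coinv, sub_eq_zero] using n.2

/-- `H ⊗ -` is exact over a field, so `H ⊗ M^{coH}` is the kernel of `H ⊗ (ρʳ - (· ⊗ 1_H))`,
and `ρˡ(n)` lies in it because the two coactions commute. -/
theorem exists_lTensor_subtype_eq_coactL (n : coinv k Q.one B.coactR) :
    ∃ w : H ⊗[k] coinv k Q.one B.coactR,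
      (coinv k Q.one B.coactR).subtype.lTensor H w = B.coactL n := by
  have hexact : Function.Exact ((coinv k Q.one B.coactR).subtype.lTensor H)
      ((B.coactR - (TensorProduct.mk k M H).flip Q.one).lTensor H) :=
    Module.Flat.lTensor_exact H (LinearMap.exact_subtype_ker_map _)
  refine (hexact _).mp ?_
  have hbicom := LinearMap.congr_fun B.bicom n.1
  simp only [LinearMap.comp_apply, LinearEquiv.coe_coe, B.coactR_coinv] at hbicom
  rw [LinearMap.lTensor_sub, LinearMap.sub_apply, sub_eq_zero, hbicom, LinearMap.rTensor_tmul]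
  induction B.coactL n.1 using TensorProduct.induction_on with
  | zero => simp
  | add u v hu hv => simp only [map_add, add_tmul, hu, hv]
  | tmul a m => simp

theorem coactR_act_coinv (n : coinv k Q.one B.coactR) (h : H) :
    B.coactR (B.act (n.1 ⊗ₜ h)) = (B.act ∘ₗ TensorProduct.mk k M H n.1).rTensor H (Q.comul h) := by
  have hact := LinearMap.congr_fun B.coactR_act (n.1 ⊗ₜ h)
  simp only [LinearMap.comp_apply, LinearEquiv.coe_coe, map_tmul, B.coactR_coinv] at hact
  rw [hact]
  induction Q.comul h using TensorProduct.induction_on with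
  | zero => simp
  | add u v hu hv => simp only [map_add, tmul_add, hu, hv]
  | tmul h₁ h₂ => simp [Q.one_mul']

/-- The factor `ω(c₁ ⊗ z₂)` of `act_act` is `ω(1_H ⊗ z₂)` for coinvariant `c`, so it drops out:
`c₀ z₁ ω(c₁ ⊗ z₂) = c z`. -/
theorem act_mul_omega_coinv (c : coinv k Q.one B.coactR) (z : H ⊗[k] H) :
    TensorProduct.rid k M (map (B.act ∘ₗ Q.mul.lTensor M) Q.omega
        (tensorTensorTensorComm k M H (H ⊗[k] H) (H ⊗[k] H)
          (B.coactR c ⊗ₜ comul2 k Q.comul z)))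
      = B.act (c.1 ⊗ₜ Q.mul z) := by
  rw [B.coactR_coinv]
  conv_rhs => rw [← Q.rid_counit2_lTensor_comul2 z]
  induction comul2 k Q.comul z using TensorProduct.induction_on with
  | zero => simp
  | add u v hu hv => simp only [map_add, tmul_add, hu, hv]
  | tmul z₁ z₂ => simp [Q.omega_one_left]

end Bicomodule

section TauOfProperties

variable {k : Type u} [Field k] {H : Type u} [AddCommGroup H] [Module k H]
  {M : Type u} [AddCommGroup M] [Module k M] {Q : DualQuasiBialgebra k H}
  {B : Bicomodule k H Q M} (hb : Function.Bijective (epsM k B))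

theorem epsM_tmul (n : coinv k Q.one B.coactR) (h : H) : epsM k B (n ⊗ₜ h) = B.act (n.1 ⊗ₜ h) :=
  rfl

theorem tauOf_epsM (x : coinv k Q.one B.coactR ⊗[k] H) :
    tauOf k B hb (epsM k B x) = TensorProduct.rid k _ (Q.counit.lTensor _ x) := by
  simp only [tauOf, LinearMap.comp_apply, LinearEquiv.coe_coe,
    LinearEquiv.ofBijective_symm_apply_apply]

theorem tauOf_act_coinv (c : coinv k Q.one B.coactR) (h : H) :
    tauOf k B hb (B.act (c.1 ⊗ₜ h)) = Q.counit h • c := by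
  rw [← epsM_tmul, tauOf_epsM]
  simp

theorem rTensor_tauOf_coactR_epsM (x : coinv k Q.one B.coactR ⊗[k] H) :
    (tauOf k B hb).rTensor H (B.coactR (epsM k B x)) = x := by
  induction x using TensorProduct.induction_on with
  | zero => simp
  | add u v hu hv => simp only [map_add, hu, hv]
  | tmul n h =>
    rw [epsM_tmul, B.coactR_act_coinv, ← LinearMap.rTensor_comp_apply]
    conv_rhs => rw [← Q.counit_comul h]
    induction Q.comul h using TensorProduct.induction_on with
    | zero => simp
    | add u v hu hv => simp only [map_add, hu, hv, tmul_add]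
    | tmul h₁ h₂ => simp [tauOf_act_coinv hb, smul_tmul]

theorem ofBijective_epsM_symm_apply (m : M) :
    (LinearEquiv.ofBijective (epsM k B) hb).symm m = (tauOf k B hb).rTensor H (B.coactR m) := by
  obtain ⟨x, rfl⟩ := hb.2 m
  rw [rTensor_tauOf_coactR_epsM, LinearEquiv.ofBijective_symm_apply_apply]

theorem tauOf_act_act_coinv (n : coinv k Q.one B.coactR) (y h : H) :
    (tauOf k B hb (B.act (B.act (n.1 ⊗ₜ y) ⊗ₜ h))).1
      = Q.omegaInvSmul M (B.coactL n.1 ⊗ₜ (y ⊗ₜ h)) := by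
  obtain ⟨w, hw⟩ := B.exists_lTensor_subtype_eq_coactL n
  have hact := LinearMap.congr_fun B.act_act ((n.1 ⊗ₜ y) ⊗ₜ h)
  simp only [LinearMap.comp_apply, LinearEquiv.coe_coe, LinearMap.rTensor_tmul,
    TensorProduct.assoc_tmul, map_tmul] at hact
  rw [hact, ← hw]
  clear hact hw
  conv_rhs => rw [← Q.rid_counit2_lTensor_comul2 (y ⊗ₜ h)]
  induction w using TensorProduct.induction_on with
  | zero => simp
  | add u v hu hv => simp only [map_add, add_tmul, Submodule.coe_add, hu, hv]
  | tmul a c =>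
    induction comul2 k Q.comul (y ⊗ₜ h) using TensorProduct.induction_on with
    | zero => simp
    | add u v hu hv => simp only [map_add, tmul_add, Submodule.coe_add, hu, hv]
    | tmul z₁ z₂ =>
      simp only [LinearMap.lTensor_tmul, tensorTensorTensorComm_tmul, map_tmul,
        LinearMap.id_coe, id_eq, TensorProduct.lid_tmul, map_smul, Submodule.coe_subtype]
      rw [B.act_mul_omega_coinv c z₂, tauOf_act_coinv hb]
      have hcounit := LinearMap.congr_fun Q.counit_mul z₂
      simp only [LinearMap.comp_apply] at hcounit
      simp [hcounit, smul_smul, mul_comm]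

theorem lTensor_tauOf_coactL_act_coinv (n : coinv k Q.one B.coactR) (y : H) :
    ((coinv k Q.one B.coactR).subtype ∘ₗ tauOf k B hb).lTensor H (B.coactL (B.act (n.1 ⊗ₜ y)))
      = Q.mulSwap M (B.coactL n.1 ⊗ₜ y) := by
  obtain ⟨w, hw⟩ := B.exists_lTensor_subtype_eq_coactL n
  have hact := LinearMap.congr_fun B.coactL_act (n.1 ⊗ₜ y)
  simp only [LinearMap.comp_apply, LinearEquiv.coe_coe, map_tmul] at hact
  rw [hact, ← hw]
  clear hact hw
  conv_rhs => rw [← Q.comul_counit y]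
  induction w using TensorProduct.induction_on with
  | zero => simp
  | add u v hu hv => simp only [map_add, add_tmul, hu, hv]
  | tmul a c =>
    induction Q.comul y using TensorProduct.induction_on with
    | zero => simp
    | add u v hu hv => simp only [map_add, tmul_add, hu, hv]
    | tmul y₁ y₂ => simp [tauOf_act_coinv hb]

theorem rhsTauAct_tmul (t : M →ₗ[k] M) (m : M) (h : H) :
    rhsTauAct k B t (m ⊗ₜ h) = Q.omegaInvSmul M
      (TensorProduct.assoc k (H ⊗[k] M) H H ((B.coactL ∘ₗ t).rTensor H (B.coactR m) ⊗ₜ h)) :=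
  rfl

theorem rhsColinear_apply (t : M →ₗ[k] M) (m : M) :
    rhsColinear k B t m = Q.mulSwap M ((B.coactL ∘ₗ t).rTensor H (B.coactR m)) :=
  rfl

theorem rTensor_comp_tauOf_coactR_epsM {X : Type u} [AddCommGroup X] [Module k X]
    (f : coinv k Q.one B.coactR →ₗ[k] X) (x : coinv k Q.one B.coactR ⊗[k] H) :
    (f ∘ₗ tauOf k B hb).rTensor H (B.coactR (epsM k B x)) = f.rTensor H x := by
  rw [LinearMap.rTensor_comp_apply, rTensor_tauOf_coactR_epsM]

theorem subtype_tauOf_act (m : M) (h : H) :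
    (tauOf k B hb (B.act (m ⊗ₜ h))).1
      = rhsTauAct k B ((coinv k Q.one B.coactR).subtype ∘ₗ tauOf k B hb) (m ⊗ₜ h) := by
  obtain ⟨x, rfl⟩ := hb.2 m
  rw [rhsTauAct_tmul, ← LinearMap.comp_assoc, rTensor_comp_tauOf_coactR_epsM]
  induction x using TensorProduct.induction_on with
  | zero => simp
  | add u v hu hv => simp only [map_add, add_tmul, Submodule.coe_add, hu, hv]
  | tmul n y =>
    simp only [epsM_tmul, LinearMap.rTensor_tmul, LinearMap.comp_apply, Submodule.coe_subtype,
      TensorProduct.assoc_tmul]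
    exact tauOf_act_act_coinv hb n y h

theorem lTensor_tauOf_coactL (m : M) :
    ((coinv k Q.one B.coactR).subtype ∘ₗ tauOf k B hb).lTensor H (B.coactL m)
      = rhsColinear k B ((coinv k Q.one B.coactR).subtype ∘ₗ tauOf k B hb) m := by
  obtain ⟨x, rfl⟩ := hb.2 m
  rw [rhsColinear_apply, ← LinearMap.comp_assoc, rTensor_comp_tauOf_coactR_epsM]
  induction x using TensorProduct.induction_on with
  | zero => simp
  | add u v hu hv => simp only [map_add, hu, hv]
  | tmul n y =>
    simp only [epsM_tmul, LinearMap.rTensor_tmul, LinearMap.comp_apply, Submodule.coe_subtype]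
    exact lTensor_tauOf_coactL_act_coinv hb n y

end TauOfProperties

/-- Suppose `ε_M : M^{coH} ⊗ H → M` is bijective and let
`τ := (id ⊗ ε) ∘ ε_M⁻¹`. Then (a) `ε_M⁻¹(m) = τ(m₀) ⊗ m₁`;
(b) `τ(mh) = ω⁻¹(τ(m₀)₋₁ ⊗ m₁ ⊗ h) · τ(m₀)₀`;
(c) `m₋₁ ⊗ τ(m₀) = τ(m₀)₋₁m₁ ⊗ τ(m₀)₀`; (d) `τ(m₀)m₁ = m`. -/
theorem tauOf_properties
    (k : Type u) [Field k] (H : Type u) [AddCommGroup H] [Module k H]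
    (Q : DualQuasiBialgebra k H)
    (M : Type u) [AddCommGroup M] [Module k M] (B : Bicomodule k H Q M)
    (hb : Function.Bijective (epsM k B)) :
    (∀ m : M,
      (LinearEquiv.ofBijective (epsM k B) hb).symm m
        = (map (tauOf k B hb) (LinearMap.id : H →ₗ[k] H)) (B.coactR m)) ∧
    (∀ (m : M) (h : H),
      ((coinv k Q.one B.coactR).subtype (tauOf k B hb (B.act (m ⊗ₜ[k] h))))
        = rhsTauAct k B ((coinv k Q.one B.coactR).subtype ∘ₗ tauOf k B hb) (m ⊗ₜ[k] h)) ∧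
    (∀ m : M,
      (((coinv k Q.one B.coactR).subtype ∘ₗ tauOf k B hb).lTensor H) (B.coactL m)
        = rhsColinear k B ((coinv k Q.one B.coactR).subtype ∘ₗ tauOf k B hb) m) ∧
    (∀ m : M,
      epsM k B ((map (tauOf k B hb) (LinearMap.id : H →ₗ[k] H)) (B.coactR m)) = m) := by
  refine ⟨ofBijective_epsM_symm_apply hb, subtype_tauOf_act hb, lTensor_tauOf_coactL hb,
    fun m => ?_⟩
  rw [← LinearMap.rTensor_def, ← ofBijective_epsM_symm_apply hb,
    LinearEquiv.apply_ofBijective_symm_apply]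

end
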